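/- Let Δ be a compact Hausdorff space, u : Δ → ℝ continuous, v : Δ → ℝ upper semicontinuous; set f(α) = max{v(w) : w ∈ Δ, u(w) = α} (−∞ if empty) and τ(q) = min_{w∈Δ}(q·u(w) − v(w)). Define ∂⁻τ(∞) = lim_{q→∞} τ(q)/q and ∂⁺τ(−∞) = lim_{q→−∞} τ(q)/q (these limits exist and are finite). Then there exists w⁺ ∈ Δ such that q ↦ q·u(w⁺) − v(w⁺) is the affine asymptote of τ at +∞ (i.e. u(w⁺) = ∂⁻τ(∞) and τ(q) − (q·u(w⁺) − v(w⁺)) → 0 as q → ∞), and similarly at −∞. In particular, f(∂⁻τ(∞)) = τ*(∂⁻τ(∞)) and f(∂⁺τ(−∞)) = τ*(∂⁺τ(−∞)). -/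

import Mathlib

open Filter Set Topology

noncomputable section

variable {Δ : Type*} [TopologicalSpace Δ]

/-- The unconstrained dual `τ(q) = min_{w∈Δ} (q·u(w) − v(w))`. -/
def tauOpt (u v : Δ → ℝ) (q : ℝ) : ℝ :=
  sInf (Set.range fun w => q * u w - v w)

/-- The constrained optimum `f(α) = max{v(w) : u(w) = α}`, valued in `EReal`
(with value `−∞ = ⊥` if the constraint set is empty). -/
def fOpt (u v : Δ → ℝ) (α : ℝ) : EReal :=
  sSup ((fun w => ((v w : ℝ) : EReal)) '' {w | u w = α})

/-- The concave conjugate `g*(α) = inf_{q∈ℝ} (qα − g(q))`, valued in `EReal`. -/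
def concConj (g : ℝ → ℝ) (α : ℝ) : EReal :=
  ⨅ q : ℝ, ((q * α - g q : ℝ) : EReal)

/-- `τ` is supported at `(q, α)`: there is `w ∈ Δ` with `u(w) = α` and
`τ(q) = q·u(w) − v(w)`. -/
def SupportedAt (u v : Δ → ℝ) (q α : ℝ) : Prop :=
  ∃ w : Δ, u w = α ∧ tauOpt u v q = q * u w - v w

/-- `α` belongs to the subdifferential `∂τ(q)` of the concave function `τ` at `q`,
i.e. the line through `(q, τ(q))` with slope `α` lies above the graph of `τ`. -/
def InSubdiff (τ : ℝ → ℝ) (q α : ℝ) : Prop :=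
  ∀ y : ℝ, τ y ≤ τ q + α * (y - q)

/-!
Let `w⁺` minimize `u` and, among the minimizers of `u`, maximize `v`. Then
`q ↦ τ(q) − q·u(w⁺)` is nondecreasing and bounded above by `−v(w⁺)`. It tends to `−v(w⁺)`:
given `b > v(w⁺)`, the open sets `{w | v(w) − q·(u(w) − u(w⁺)) < b}` increase with `q` and
cover `Δ` (points off the fiber `u = u(w⁺)` are eventually penalised, points on it have
`v ≤ v(w⁺)`), so by compactness one of them is all of `Δ`. The slope `u(w⁺)` of the asymptote
and the value `v(w⁺)` of both `f` and `τ*` at it follow. The case `q → −∞` is the case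
`q → +∞` for `−u`.
-/

lemma UpperSemicontinuous.lowerSemicontinuous_neg {α : Type*} [TopologicalSpace α]
    {f : α → ℝ} (hf : UpperSemicontinuous f) : LowerSemicontinuous fun x => -f x :=
  fun x y hy => (hf x (-y) (lt_neg.1 hy)).mono fun _ hx' => lt_neg.2 hx'

lemma tendsto_div_of_tendsto_sub_mul {f : ℝ → ℝ} {a L : ℝ}
    (h : Tendsto (fun q => f q - q * a) atTop (𝓝 L)) :
    Tendsto (fun q => f q / q) atTop (𝓝 a) := by
  have h0 := (h.div_atTop tendsto_id).add_const a
  rw [zero_add] at h0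
  refine h0.congr' ?_
  filter_upwards [eventually_ne_atTop 0] with q hq
  change (f q - q * a) / q + a = f q / q
  rw [sub_div, mul_div_cancel_left₀ _ hq, sub_add_cancel]

lemma concConj_eq_of_tendsto {g : ℝ → ℝ} {α L : ℝ} (hg : Antitone fun q => q * α - g q)
    (h : Tendsto (fun q => q * α - g q) atTop (𝓝 L)) : concConj g α = L :=
  le_antisymm
    (ge_of_tendsto (EReal.tendsto_coe.2 h) (Eventually.of_forall fun q => iInf_le _ q))
    (le_iInf fun q => EReal.coe_le_coe_iff.2 (hg.le_of_tendsto h q))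

lemma concConj_comp_neg (g : ℝ → ℝ) (α : ℝ) :
    concConj (fun q => g (-q)) (-α) = concConj g α := by
  unfold concConj
  rw [← (Equiv.neg ℝ).iInf_comp]
  simp only [Equiv.neg_apply, neg_neg, neg_mul_neg]

lemma tauOpt_neg {X : Type*} (u v : X → ℝ) : tauOpt (-u) v = fun q => tauOpt u v (-q) := by
  ext q
  simp only [tauOpt, Pi.neg_apply, mul_neg, neg_mul]

lemma fOpt_neg {X : Type*} (u v : X → ℝ) (α : ℝ) : fOpt (-u) v (-α) = fOpt u v α := by
  simp only [fOpt, Pi.neg_apply, neg_inj]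

lemma fOpt_eq_of_isMaxOn {X : Type*} {u v : X → ℝ} {w₀ : X}
    (hmax : IsMaxOn v {w | u w = u w₀} w₀) : fOpt u v (u w₀) = v w₀ :=
  le_antisymm (sSup_le <| by rintro _ ⟨w, hw, rfl⟩; exact EReal.coe_le_coe_iff.2 (hmax hw))
    (le_sSup ⟨w₀, rfl, rfl⟩)

section Compact

variable [CompactSpace Δ] [Nonempty Δ] {u v : Δ → ℝ}

lemma exists_isMinOn_isMaxOn_fiber (hu : Continuous u) (hv : UpperSemicontinuous v) :
    ∃ w₀, IsMinOn u univ w₀ ∧ IsMaxOn v {w | u w = u w₀} w₀ := by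
  obtain ⟨w₁, -, hw₁⟩ := isCompact_univ.exists_isMinOn univ_nonempty hu.continuousOn
  obtain ⟨w₀, hw₀, hmax⟩ := (hv.upperSemicontinuousOn _).exists_isMaxOn (s := {w | u w = u w₁})
    ⟨w₁, rfl⟩ (isClosed_eq hu continuous_const).isCompact
  have hw₀ : u w₀ = u w₁ := hw₀
  refine ⟨w₀, fun w _ => hw₀ ▸ hw₁ (mem_univ w), ?_⟩
  rwa [hw₀]

lemma isLeast_tauOpt (hu : Continuous u) (hv : UpperSemicontinuous v) (q : ℝ) :
    IsLeast (range fun w => q * u w - v w) (tauOpt u v q) := by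
  have hc : Continuous fun w => q * u w := continuous_const.mul hu
  have hlsc : LowerSemicontinuous fun w => q * u w + -v w :=
    hc.lowerSemicontinuous.add hv.lowerSemicontinuous_neg
  simp only [← sub_eq_add_neg] at hlsc
  obtain ⟨w, -, hw⟩ := (hlsc.lowerSemicontinuousOn _).exists_isMinOn univ_nonempty isCompact_univ
  have hleast : IsLeast (range fun w => q * u w - v w) (q * u w - v w) :=
    ⟨⟨w, rfl⟩, by rintro _ ⟨w', rfl⟩; exact hw (mem_univ w')⟩
  rwa [tauOpt, hleast.csInf_eq]

lemma tauOpt_le (hu : Continuous u) (hv : UpperSemicontinuous v) (q : ℝ) (w : Δ) :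
    tauOpt u v q ≤ q * u w - v w :=
  (isLeast_tauOpt hu hv q).2 ⟨w, rfl⟩

lemma exists_tauOpt_eq (hu : Continuous u) (hv : UpperSemicontinuous v) (q : ℝ) :
    ∃ w, tauOpt u v q = q * u w - v w := by
  obtain ⟨w, hw⟩ := (isLeast_tauOpt hu hv q).1
  exact ⟨w, hw.symm⟩

lemma monotone_tauOpt_sub_mul (hu : Continuous u) (hv : UpperSemicontinuous v) {a : ℝ}
    (ha : ∀ w, a ≤ u w) : Monotone fun q => tauOpt u v q - q * a := by
  intro q q' hqq'
  obtain ⟨w, hw⟩ := exists_tauOpt_eq hu hv q'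
  have hle := tauOpt_le hu hv q w
  have hslope : q * (u w - a) ≤ q' * (u w - a) :=
    mul_le_mul_of_nonneg_right hqq' (sub_nonneg.2 (ha w))
  dsimp only
  linarith

lemma exists_lt_tauOpt_sub_mul (hu : Continuous u) (hv : UpperSemicontinuous v) {w₀ : Δ}
    (hmin : IsMinOn u univ w₀) (hmax : IsMaxOn v {w | u w = u w₀} w₀) {b : ℝ} (hb : v w₀ < b) :
    ∃ q, -b < tauOpt u v q - q * u w₀ := by
  set U : ℝ → Set Δ := fun q => {w | v w - q * (u w - u w₀) < b}
  have hUopen : ∀ q, IsOpen (U q) := fun q => by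
    have hc : Continuous fun w => -(q * (u w - u w₀)) :=
      (continuous_const.mul (hu.sub continuous_const)).neg
    have husc := hv.add hc.upperSemicontinuous
    simp only [← sub_eq_add_neg] at husc
    exact husc.isOpen_preimage b
  have hUmono : Monotone U := fun q q' hqq' w (hw : _ < b) => by
    change _ < b
    have : q * (u w - u w₀) ≤ q' * (u w - u w₀) :=
      mul_le_mul_of_nonneg_right hqq' (sub_nonneg.2 (hmin (mem_univ w)))
    linarith
  have hUcover : univ ⊆ ⋃ q, U q := by
    intro w _
    by_cases hw : u w = u w₀
    · have : v w ≤ v w₀ := hmax hw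
      exact mem_iUnion.2 ⟨0, show _ < b by rw [zero_mul, sub_zero]; linarith⟩
    · refine mem_iUnion.2 ⟨(v w - v w₀) / (u w - u w₀), show _ < b from ?_⟩
      rw [div_mul_cancel₀ _ (sub_ne_zero.2 hw)]
      linarith
  obtain ⟨q, hq⟩ := isCompact_univ.elim_directed_cover U hUopen hUcover hUmono.directed_le
  obtain ⟨w, hw⟩ := exists_tauOpt_eq hu hv q
  have : v w - q * (u w - u w₀) < b := hq (mem_univ w)
  exact ⟨q, by rw [hw]; linarith⟩

lemma tendsto_tauOpt_sub_mul_atTop (hu : Continuous u) (hv : UpperSemicontinuous v) {w₀ : Δ}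
    (hmin : IsMinOn u univ w₀) (hmax : IsMaxOn v {w | u w = u w₀} w₀) :
    Tendsto (fun q => tauOpt u v q - q * u w₀) atTop (𝓝 (-v w₀)) := by
  refine tendsto_order.2 ⟨fun a ha => ?_, fun a ha => Eventually.of_forall fun q => ?_⟩
  · obtain ⟨q₀, hq₀⟩ := exists_lt_tauOpt_sub_mul hu hv hmin hmax (b := -a) (by linarith)
    filter_upwards [eventually_ge_atTop q₀] with q hq
    exact (neg_neg a ▸ hq₀).trans_le
      (monotone_tauOpt_sub_mul hu hv (fun w => hmin (mem_univ w)) hq)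
  · linarith [tauOpt_le hu hv q w₀]

theorem exists_affine_asymptote_atTop (hu : Continuous u) (hv : UpperSemicontinuous v) :
    ∃ wp : Δ,
    Tendsto (fun q : ℝ => tauOpt u v q / q) atTop (𝓝 (u wp)) ∧
    Tendsto (fun q : ℝ => tauOpt u v q - (q * u wp - v wp)) atTop (𝓝 0) ∧
    fOpt u v (u wp) = concConj (tauOpt u v) (u wp) := by
  obtain ⟨wp, hmin, hmax⟩ := exists_isMinOn_isMaxOn_fiber hu hv
  have hlim := tendsto_tauOpt_sub_mul_atTop hu hv hmin hmax
  have hmono := monotone_tauOpt_sub_mul hu hv (fun w => hmin (mem_univ w))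
  refine ⟨wp, tendsto_div_of_tendsto_sub_mul hlim, ?_, ?_⟩
  · have hgap := hlim.add_const (v wp)
    rw [neg_add_cancel] at hgap
    exact hgap.congr fun q => by ring
  · rw [fOpt_eq_of_isMaxOn hmax, concConj_eq_of_tendsto (L := v wp)]
    · simpa only [neg_sub] using hmono.neg
    · simpa only [neg_sub, neg_neg] using hlim.neg

theorem exists_affine_asymptote_atBot (hu : Continuous u) (hv : UpperSemicontinuous v) :
    ∃ wm : Δ,
    Tendsto (fun q : ℝ => tauOpt u v q / q) atBot (𝓝 (u wm)) ∧
    Tendsto (fun q : ℝ => tauOpt u v q - (q * u wm - v wm)) atBot (𝓝 0) ∧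
    fOpt u v (u wm) = concConj (tauOpt u v) (u wm) := by
  obtain ⟨wm, hslope, hgap, hconj⟩ := exists_affine_asymptote_atTop (u := -u) hu.neg hv
  rw [tauOpt_neg] at hslope hgap hconj
  refine ⟨wm, ?_, ?_, ?_⟩
  · simpa only [Function.comp_def, neg_neg, div_neg, Pi.neg_apply] using
      (hslope.comp tendsto_neg_atBot_atTop).neg
  · simpa only [Function.comp_def, neg_neg, Pi.neg_apply, neg_mul_neg] using
      hgap.comp tendsto_neg_atBot_atTop
  · rwa [Pi.neg_apply, fOpt_neg, concConj_comp_neg] at hconj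

end Compact

theorem stmt_12_general {Δ : Type*} [TopologicalSpace Δ] [CompactSpace Δ] [Nonempty Δ]
    (u v : Δ → ℝ) (hu : Continuous u) (hv : UpperSemicontinuous v) :
    (∃ wp : Δ,
      Tendsto (fun q : ℝ => tauOpt u v q / q) atTop (nhds (u wp)) ∧
      Tendsto (fun q : ℝ => tauOpt u v q - (q * u wp - v wp)) atTop (nhds 0) ∧
      fOpt u v (u wp) = concConj (tauOpt u v) (u wp)) ∧
    (∃ wm : Δ,
      Tendsto (fun q : ℝ => tauOpt u v q / q) atBot (nhds (u wm)) ∧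
      Tendsto (fun q : ℝ => tauOpt u v q - (q * u wm - v wm)) atBot (nhds 0) ∧
      fOpt u v (u wm) = concConj (tauOpt u v) (u wm)) :=
  ⟨exists_affine_asymptote_atTop hu hv, exists_affine_asymptote_atBot hu hv⟩

/-- `τ` is supported at `(±∞, ∂∓τ(±∞))`: there are `w⁺, w⁻ ∈ Δ` realizing
the affine asymptotes of `τ` at `+∞` and `−∞`; in particular `f = τ*` at the slopes
`∂⁻τ(∞)` and `∂⁺τ(−∞)` of these asymptotes. -/
theorem stmt_12 {Δ : Type*} [TopologicalSpace Δ] [CompactSpace Δ] [T2Space Δ] [Nonempty Δ]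
    (u v : Δ → ℝ) (hu : Continuous u) (hv : UpperSemicontinuous v) :
    (∃ wp : Δ,
      Tendsto (fun q : ℝ => tauOpt u v q / q) atTop (nhds (u wp)) ∧
      Tendsto (fun q : ℝ => tauOpt u v q - (q * u wp - v wp)) atTop (nhds 0) ∧
      fOpt u v (u wp) = concConj (tauOpt u v) (u wp)) ∧
    (∃ wm : Δ,
      Tendsto (fun q : ℝ => tauOpt u v q / q) atBot (nhds (u wm)) ∧
      Tendsto (fun q : ℝ => tauOpt u v q - (q * u wm - v wm)) atBot (nhds 0) ∧
      fOpt u v (u wm) = concConj (tauOpt u v) (u wm)) :=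
  stmt_12_general u v hu hv
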